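/- (The Diffusion Duality, token level.) Fix an integer K ≥ 2, an index k : Fin K, and ᾱ ∈ [0,1). Let μ_k = N(ᾱ e_k, (1−ᾱ²) I_K) and let A : ℝ^K → Fin K send w to the least index attaining max_i w_i. Then the pushforward measure A_* μ_k on Fin K assigns to each singleton {i} the mass 𝒯(ᾱ)·(if i = k then 1 else 0) + (1 − 𝒯(ᾱ))/K; that is, argmax transforms the Gaussian marginal N(ᾱ e_k, (1−ᾱ²) I_K) into the Uniform-state categorical marginal Cat(𝒯(ᾱ)·e_k + (1 − 𝒯(ᾱ))·𝟙/K). -/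

import Mathlib

/-!
With `σ = √(1 - ᾱ²)`, index `k` wins the argmax exactly when every other coordinate lies below
`w_k`. Conditioning on `w_k = t`, the other coordinates are independent `N(0, σ²)`, so
`P(A = k) = E[Φ(w_k / σ)^(K-1)] = ∫ φ(z - ᾱ/σ) Φ(z)^(K-1) dz` after rescaling by `σ`.
Ties are null and the law is invariant under permutations fixing `k`, so the other `K - 1`
indices share the mass `1 - P(A = k)` equally. `𝒯` is precisely the affine reparametrisation of
`P(A = k)` for which these two masses read `𝒯 + (1 - 𝒯)/K` and `(1 - 𝒯)/K`.
-/

open MeasureTheory ProbabilityTheory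

/-- The standard normal density `φ(z) = exp(-z²/2)/√(2π)`. -/
noncomputable def stdGaussianPDF (z : ℝ) : ℝ :=
  Real.exp (-z ^ 2 / 2) / Real.sqrt (2 * Real.pi)

/-- The standard normal cumulative distribution function `Φ(z) = ∫_{-∞}^z φ(u) du`. -/
noncomputable def stdGaussianCDF (z : ℝ) : ℝ :=
  ∫ u in Set.Iic z, stdGaussianPDF u

/-- The diffusion transformation operator
`𝒯(ᾱ) = (K/(K-1)) (∫_ℝ φ(z - ᾱ/√(1-ᾱ²)) Φ(z)^{K-1} dz - 1/K)`. -/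
noncomputable def diffTransform (K : ℕ) (α : ℝ) : ℝ :=
  ((K : ℝ) / ((K : ℝ) - 1)) *
    ((∫ z : ℝ, stdGaussianPDF (z - α / Real.sqrt (1 - α ^ 2))
        * stdGaussianCDF z ^ (K - 1)) - 1 / (K : ℝ))

/-- The least index attaining the maximum of `w : Fin K → ℝ`. -/
noncomputable def argmaxIdx {K : ℕ} [NeZero K] (w : Fin K → ℝ) : Fin K :=
  (Finset.univ.filter fun i => ∀ j, w j ≤ w i).min' (by
    obtain ⟨i, -, hi⟩ :=
      Finset.exists_max_image (Finset.univ : Finset (Fin K)) w Finset.univ_nonempty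
    exact ⟨i, Finset.mem_filter.mpr ⟨Finset.mem_univ i, fun j => hi j (Finset.mem_univ j)⟩⟩)

open Set Function
open scoped NNReal

lemma stdGaussianPDF_sub_eq_gaussianPDFReal (m z : ℝ) :
    stdGaussianPDF (z - m) = gaussianPDFReal m 1 z := by
  simp [stdGaussianPDF, gaussianPDFReal, div_eq_inv_mul, mul_comm]

lemma stdGaussianPDF_nonneg (z : ℝ) : 0 ≤ stdGaussianPDF z := by
  unfold stdGaussianPDF
  positivity

lemma stdGaussianCDF_eq_cdf : stdGaussianCDF = cdf (gaussianReal 0 1) := by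
  ext z
  have hpdf : stdGaussianPDF = gaussianPDFReal 0 1 :=
    funext fun u => by simpa using stdGaussianPDF_sub_eq_gaussianPDFReal 0 u
  rw [cdf_eq_real, measureReal_def, gaussianReal_apply_eq_integral 0 one_ne_zero,
    ENNReal.toReal_ofReal (setIntegral_nonneg measurableSet_Iic
      fun u _ => gaussianPDFReal_nonneg 0 1 u), stdGaussianCDF, hpdf]

lemma measurable_stdGaussianCDF : Measurable stdGaussianCDF := by
  rw [stdGaussianCDF_eq_cdf]
  exact (monotone_cdf _).measurable

lemma stdGaussianCDF_mem_Icc (z : ℝ) : stdGaussianCDF z ∈ Icc 0 1 := by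
  rw [stdGaussianCDF_eq_cdf]
  exact ⟨cdf_nonneg _ z, cdf_le_one _ z⟩

lemma gaussianReal_zero_one_Iio (s : ℝ) :
    gaussianReal 0 1 (Iio s) = ENNReal.ofReal (stdGaussianCDF s) := by
  have := nullSingletonClass_gaussianReal (μ := 0) one_ne_zero
  rw [stdGaussianCDF_eq_cdf, ofReal_cdf, measure_congr Iio_ae_eq_Iic]

lemma gaussianReal_map_div_sqrt (a : ℝ) {v : ℝ≥0} (hv : v ≠ 0) :
    (gaussianReal a v).map (· / √v) = gaussianReal (a / √v) 1 := by
  rw [gaussianReal_map_div_const]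
  congr 1
  ext
  simp [Real.sq_sqrt v.coe_nonneg, hv]

lemma gaussianReal_Iio (a : ℝ) {v : ℝ≥0} (hv : v ≠ 0) (t : ℝ) :
    gaussianReal a v (Iio t) = gaussianReal (a / √v) 1 (Iio (t / √v)) := by
  have hσ : 0 < √(v : ℝ) := Real.sqrt_pos.2 (NNReal.coe_pos.2 (pos_iff_ne_zero.2 hv))
  rw [← gaussianReal_map_div_sqrt a hv, Measure.map_apply (by fun_prop) measurableSet_Iio]
  congr 1
  ext x
  simp [div_lt_div_iff_of_pos_right hσ]

lemma lintegral_ofReal_gaussianReal_one (m : ℝ) {g : ℝ → ℝ}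
    (hg : Integrable g (gaussianReal m 1)) (hg_nonneg : 0 ≤ g) :
    ∫⁻ z, ENNReal.ofReal (g z) ∂gaussianReal m 1
      = ENNReal.ofReal (∫ z, stdGaussianPDF (z - m) * g z) := by
  rw [← ofReal_integral_eq_lintegral_ofReal hg (ae_of_all _ hg_nonneg),
    integral_gaussianReal_eq_integral_smul one_ne_zero]
  simp_rw [stdGaussianPDF_sub_eq_gaussianPDFReal, smul_eq_mul]

def strictMaxSet {ι : Type*} (i : ι) : Set (ι → ℝ) := {w | ∀ j, j ≠ i → w j < w i}

lemma measurableSet_strictMaxSet {ι : Type*} [Countable ι] (i : ι) :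
    MeasurableSet (strictMaxSet i) := by
  simp only [strictMaxSet, ofPred_forall]
  exact .iInter fun j => .iInter fun _ =>
    measurableSet_lt (measurable_pi_apply j) (measurable_pi_apply i)

section argmax

variable {K : ℕ} [NeZero K]

lemma argmaxIdx_eq_iff_isLeast {w : Fin K → ℝ} {i : Fin K} :
    argmaxIdx w = i ↔ IsLeast {i' | ∀ j, w j ≤ w i'} i := by
  have h : IsLeast (↑(Finset.univ.filter fun i' => ∀ j, w j ≤ w i')) (argmaxIdx w) :=
    Finset.isLeast_min' _ _
  simp only [Finset.coe_filter, Finset.mem_univ, true_and] at h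
  exact ⟨fun hi => hi ▸ h, h.unique⟩

lemma measurable_argmaxIdx : Measurable (argmaxIdx (K := K)) := by
  have hmax : ∀ i : Fin K, MeasurableSet {w : Fin K → ℝ | ∀ j, w j ≤ w i} := fun i => by
    simp only [ofPred_forall]
    exact .iInter fun j => measurableSet_le (measurable_pi_apply j) (measurable_pi_apply i)
  refine measurable_to_countable' fun i => ?_
  have : argmaxIdx ⁻¹' {i}
      = {w | ∀ j, w j ≤ w i} ∩ ⋂ i' < i, {w | ∀ j, w j ≤ w i'}ᶜ := by
    ext w
    simp only [mem_preimage, mem_singleton_iff, argmaxIdx_eq_iff_isLeast, IsLeast, lowerBounds,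
      mem_inter_iff, mem_iInter, mem_compl_iff, mem_ofPred_eq, and_congr_right_iff]
    exact fun _ => forall_congr' fun i' => by contrapose!; exact and_comm
  rw [this]
  exact (hmax i).inter (.biInter (to_countable _) fun i' _ => (hmax i').compl)

lemma argmaxIdx_eq_iff_mem_strictMaxSet {w : Fin K → ℝ} (hw : Injective w) {i : Fin K} :
    argmaxIdx w = i ↔ w ∈ strictMaxSet i := by
  have hmax : ∀ j, w j ≤ w (argmaxIdx w) := (argmaxIdx_eq_iff_isLeast.1 rfl).1
  constructor
  · rintro rfl j hj
    exact (hmax j).lt_of_ne (hw.ne hj)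
  · intro hi
    by_contra hne
    exact (hi _ hne).not_ge (hmax i)

end argmax

section pi

variable {n : ℕ}

lemma pi_preimage_piFinSuccAbove {X : Type*} [MeasurableSpace X] (ν : Fin (n + 1) → Measure X)
    [∀ j, SigmaFinite (ν j)] (p : Fin (n + 1)) {s : Set (X × (Fin n → X))}
    (hs : MeasurableSet s) :
    Measure.pi ν (MeasurableEquiv.piFinSuccAbove (fun _ => X) p ⁻¹' s)
      = ∫⁻ t, Measure.pi (fun j => ν (p.succAbove j)) (Prod.mk t ⁻¹' s) ∂ν p := by
  rw [(measurePreserving_piFinSuccAbove ν p).measure_preimage hs.nullMeasurableSet,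
    Measure.prod_apply hs]

variable (ν : Fin (n + 1) → Measure ℝ) [∀ j, SigmaFinite (ν j)]

lemma pi_strictMaxSet (p : Fin (n + 1)) :
    Measure.pi ν (strictMaxSet p) = ∫⁻ t, ∏ j, ν (p.succAbove j) (Iio t) ∂ν p := by
  have hpre : strictMaxSet p
      = MeasurableEquiv.piFinSuccAbove (fun _ => ℝ) p ⁻¹' {q | ∀ j, q.2 j < q.1} := by
    ext w
    simp [strictMaxSet, p.forall_iff_succAbove, Fin.succAbove_ne, Fin.removeNth]
  have hmeas : MeasurableSet {q : ℝ × (Fin n → ℝ) | ∀ j, q.2 j < q.1} := by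
    simp only [ofPred_forall]
    exact .iInter fun j => measurableSet_lt (by fun_prop) measurable_fst
  rw [hpre, pi_preimage_piFinSuccAbove ν p hmeas]
  refine lintegral_congr fun t => ?_
  rw [← Measure.pi_pi]
  congr 1
  ext v
  simp

lemma pi_coord_eq_null [∀ j, NullSingletonClass (ν j)] {a b : Fin (n + 1)} (hab : a ≠ b) :
    Measure.pi ν {w | w a = w b} = 0 := by
  obtain ⟨j, rfl⟩ := Fin.exists_succAbove_eq hab.symm
  have hpre : {w : Fin (n + 1) → ℝ | w a = w (a.succAbove j)}
      = MeasurableEquiv.piFinSuccAbove (fun _ => ℝ) a ⁻¹' {q | q.2 j = q.1} := by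
    ext w
    simp [eq_comm, Fin.removeNth]
  rw [hpre, pi_preimage_piFinSuccAbove ν a (measurableSet_eq_fun (by fun_prop) measurable_fst)]
  refine (lintegral_congr fun t => ?_).trans lintegral_zero
  exact Measure.pi_hyperplane (fun j => ν (a.succAbove j)) j t

lemma ae_injective_pi [∀ j, NullSingletonClass (ν j)] :
    ∀ᵐ w ∂Measure.pi ν, Injective w := by
  have h : ∀ a b : Fin (n + 1), ∀ᵐ w ∂Measure.pi ν, w a = w b → a = b := fun a b => by
    by_cases hab : a = b
    · exact ae_of_all _ fun _ _ => hab
    · filter_upwards [measure_eq_zero_iff_ae_notMem.1 (pi_coord_eq_null ν hab)] with w hw heq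
      exact absurd heq hw
  filter_upwards [ae_all_iff.2 fun a => ae_all_iff.2 (h a)] with w hw a b
  exact hw a b

lemma map_argmaxIdx_singleton [∀ j, NullSingletonClass (ν j)] (i : Fin (n + 1)) :
    (Measure.pi ν).map argmaxIdx {i} = Measure.pi ν (strictMaxSet i) := by
  rw [Measure.map_apply measurable_argmaxIdx (measurableSet_singleton i)]
  refine measure_congr ?_
  filter_upwards [ae_injective_pi ν] with w hw
  exact propext (argmaxIdx_eq_iff_mem_strictMaxSet hw)

end pi

lemma pi_strictMaxSet_perm {ι : Type*} [Fintype ι] (ν : ι → Measure ℝ)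
    [∀ j, SigmaFinite (ν j)] (f : ι ≃ ι) (hν : ∀ j, ν (f j) = ν j) (i : ι) :
    Measure.pi ν (strictMaxSet (f i)) = Measure.pi ν (strictMaxSet i) := by
  have hmp := measurePreserving_piCongrLeft (α := fun _ => ℝ) ν f
  simp only [hν] at hmp
  have hpre :
      MeasurableEquiv.piCongrLeft (fun _ => ℝ) f ⁻¹' strictMaxSet (f i) = strictMaxSet i := by
    ext w
    simp only [mem_preimage, strictMaxSet, mem_ofPred_eq]
    rw [← f.forall_congr_right]
    simp only [MeasurableEquiv.piCongrLeft_apply_apply, f.injective.ne_iff]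
  rw [← hpre, hmp.measure_preimage (measurableSet_strictMaxSet _).nullMeasurableSet]

lemma pi_gaussianReal_strictMaxSet_self {n : ℕ} (k : Fin (n + 1)) (a : ℝ) {v : ℝ≥0}
    (hv : v ≠ 0) :
    Measure.pi (fun j => gaussianReal (if j = k then a else 0) v) (strictMaxSet k)
      = ENNReal.ofReal (∫ z, stdGaussianPDF (z - a / √v) * stdGaussianCDF z ^ n) := by
  have hΦ : Measurable fun z => stdGaussianCDF z ^ n := measurable_stdGaussianCDF.pow_const n
  have hΦ_nonneg (z : ℝ) : 0 ≤ stdGaussianCDF z ^ n :=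
    pow_nonneg (stdGaussianCDF_mem_Icc z).1 n
  have hpow (z : ℝ) :
      ENNReal.ofReal (stdGaussianCDF z) ^ n = ENNReal.ofReal (stdGaussianCDF z ^ n) :=
    (ENNReal.ofReal_pow (stdGaussianCDF_mem_Icc z).1 n).symm
  rw [pi_strictMaxSet]
  simp only [if_true, k.succAbove_ne, if_false, gaussianReal_Iio _ hv, zero_div,
    gaussianReal_zero_one_Iio, Finset.prod_const, Finset.card_univ, Fintype.card_fin, hpow]
  rw [← lintegral_map (f := fun z => ENNReal.ofReal (stdGaussianCDF z ^ n)) hΦ.ennreal_ofReal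
    (by fun_prop), gaussianReal_map_div_sqrt a hv]
  refine lintegral_ofReal_gaussianReal_one _ ?_ hΦ_nonneg
  refine .of_bound hΦ.aestronglyMeasurable 1 (ae_of_all _ fun z => ?_)
  rw [Real.norm_of_nonneg (hΦ_nonneg z)]
  exact pow_le_one₀ (stdGaussianCDF_mem_Icc z).1 (stdGaussianCDF_mem_Icc z).2

lemma measureReal_singleton_eq_of_ne {K : ℕ} (P : Measure (Fin K)) [IsProbabilityMeasure P]
    {k : Fin K} (hsym : ∀ i j, i ≠ k → j ≠ k → P {i} = P {j}) {i : Fin K} (hi : i ≠ k) :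
    P.real {i} = (1 - P.real {k}) / (K - 1) := by
  have hK : (K : ℝ) - 1 ≠ 0 := by
    intro h
    obtain rfl : K = 1 := by exact_mod_cast sub_eq_zero.1 h
    exact hi (Subsingleton.elim i k)
  have hrest : ∑ j ∈ Finset.univ.erase k, P.real {j} = (K - 1) * P.real {i} := by
    rw [Finset.sum_congr rfl fun j hj => by
        rw [measureReal_def, hsym j i (Finset.ne_of_mem_erase hj) hi, ← measureReal_def],
      Finset.sum_const, Finset.card_erase_of_mem (Finset.mem_univ k), Finset.card_univ,
      Fintype.card_fin, nsmul_eq_mul, Nat.cast_pred i.pos]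
  have hsum : P.real {k} + (K - 1) * P.real {i} = 1 := by
    rw [← hrest, Finset.add_sum_erase _ (fun j => P.real {j}) (Finset.mem_univ k),
      sum_measureReal_singleton, Finset.coe_univ, probReal_univ]
  field_simp
  linarith

noncomputable def argmaxSelfProb (K : ℕ) (α : ℝ) : ℝ :=
  ∫ z : ℝ, stdGaussianPDF (z - α / Real.sqrt (1 - α ^ 2)) * stdGaussianCDF z ^ (K - 1)

lemma diffTransform_mul_ite_add {K : ℕ} (hK : 2 ≤ K) (α : ℝ) (i k : Fin K) :
    diffTransform K α * (if i = k then 1 else 0) + (1 - diffTransform K α) / K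
      = if i = k then argmaxSelfProb K α else (1 - argmaxSelfProb K α) / (K - 1) := by
  have hK' : (2 : ℝ) ≤ K := by exact_mod_cast hK
  have : (K : ℝ) - 1 ≠ 0 := by linarith
  have : (K : ℝ) ≠ 0 := by linarith
  rw [diffTransform, ← argmaxSelfProb]
  split_ifs <;> field_simp <;> ring

/-- **The Diffusion Duality, token level.**  The pushforward of the Gaussian marginal
`N(ᾱ e_k, (1-ᾱ²) I_K)` under the (least-index) argmax map is the Uniform-state
categorical marginal `Cat(𝒯(ᾱ) e_k + (1 - 𝒯(ᾱ)) 𝟙/K)`. -/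
theorem diffusion_duality_token (K : ℕ) (hK : 2 ≤ K) [NeZero K] (k : Fin K)
    (α : ℝ) (hα0 : 0 ≤ α) (hα1 : α < 1) (i : Fin K) :
    (Measure.map argmaxIdx
        (Measure.pi fun j : Fin K =>
          gaussianReal (if j = k then α else 0) (Real.toNNReal (1 - α ^ 2)))) {i}
      = ENNReal.ofReal
          (diffTransform K α * (if i = k then 1 else 0)
            + (1 - diffTransform K α) / (K : ℝ)) := by
  obtain ⟨n, rfl⟩ : ∃ n, K = n + 1 := ⟨K - 1, by omega⟩
  have hvar : 0 < 1 - α ^ 2 := by nlinarith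
  have hv : Real.toNNReal (1 - α ^ 2) ≠ 0 := by simpa using hvar
  set ν := fun j : Fin (n + 1) =>
    gaussianReal (if j = k then α else 0) (Real.toNNReal (1 - α ^ 2))
  have (j : Fin (n + 1)) : NullSingletonClass (ν j) := nullSingletonClass_gaussianReal hv
  set P := (Measure.pi ν).map argmaxIdx
  have : IsProbabilityMeasure P :=
    Measure.isProbabilityMeasure_map measurable_argmaxIdx.aemeasurable
  have hPk : P.real {k} = argmaxSelfProb (n + 1) α := by
    rw [measureReal_def, map_argmaxIdx_singleton, pi_gaussianReal_strictMaxSet_self k α hv,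
      ENNReal.toReal_ofReal (integral_nonneg fun z => mul_nonneg (stdGaussianPDF_nonneg _)
        (pow_nonneg (stdGaussianCDF_mem_Icc z).1 n)),
      Real.coe_toNNReal _ hvar.le, argmaxSelfProb, Nat.add_sub_cancel]
  have hsym (i j : Fin (n + 1)) (hi : i ≠ k) (hj : j ≠ k) : P {i} = P {j} := by
    rw [map_argmaxIdx_singleton, map_argmaxIdx_singleton, ← Equiv.swap_apply_left j i,
      pi_strictMaxSet_perm ν (Equiv.swap j i) fun l => ?_]
    simp only [ν, Equiv.swap_apply_eq_iff, Equiv.swap_apply_of_ne_of_ne hj.symm hi.symm]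
  rw [← ofReal_measureReal, diffTransform_mul_ite_add hK, ← hPk]
  split_ifs with hik
  · rw [hik]
  · rw [measureReal_singleton_eq_of_ne P hsym hik]
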